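/- arXiv:1506.05223 — 5 statements merged into one kernel-verified Lean document; each statement's English description precedes it below -/
import Mathlib

section
/- Let G be a finite abelian group and G₀ ⊆ G a subset such that for every h ∈ G₀ and every h' ∈ G₀ \ {h}, we have h ∉ ⟨G₀ \ {h, h'}⟩. Then for every minimal zero-sum sequence A over G₀ with supp(A) ⊊ G₀ and every h ∈ supp(A), we have gcd(v_h(A), ord(h)) > 1. -/
/-- A sequence over `G₀` (a multiset with entries in `G₀`) with sum zero. -/
def IsZeroSumSeq {G : Type*} [AddCommGroup G] (G₀ : Set G) (S : Multiset G) : Prop :=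
  (∀ g ∈ S, g ∈ G₀) ∧ S.sum = 0

/-- A minimal zero-sum sequence (atom) over `G₀`. -/
def IsAtomSeq {G : Type*} [AddCommGroup G] (G₀ : Set G) (A : Multiset G) : Prop :=
  IsZeroSumSeq G₀ A ∧ A ≠ 0 ∧ ∀ B ≤ A, B ≠ 0 → B.sum = 0 → B = A

/-- The set of lengths of factorizations of `B` into atoms over `G₀`. -/
def LengthSet {G : Type*} [AddCommGroup G] (G₀ : Set G) (B : Multiset G) : Set ℕ :=
  {k | ∃ F : Multiset (Multiset G), F.card = k ∧ (∀ A ∈ F, IsAtomSeq G₀ A) ∧ F.sum = B}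

/-- The set of successive distances of a set of naturals. -/
def DistSet (L : Set ℕ) : Set ℕ :=
  {d | ∃ a b, a ∈ L ∧ b ∈ L ∧ a < b ∧ b - a = d ∧ ∀ c ∈ L, ¬(a < c ∧ c < b)}

/-- The set of distances `Δ(G₀)`. -/
def DeltaSet {G : Type*} [AddCommGroup G] (G₀ : Set G) : Set ℕ :=
  {d | ∃ B : Multiset G, IsZeroSumSeq G₀ B ∧ d ∈ DistSet (LengthSet G₀ B)}

/-- The cross number of a sequence. -/
noncomputable def crossNum {G : Type*} [AddCommGroup G] (S : Multiset G) : ℚ :=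
  (S.map (fun g => (1 : ℚ) / addOrderOf g)).sum

/-- `G₀` is an LCN-set: every atom has cross number at least 1. -/
def IsLCNSet {G : Type*} [AddCommGroup G] (G₀ : Set G) : Prop :=
  ∀ A : Multiset G, IsAtomSeq G₀ A → 1 ≤ crossNum A

/-- The set of minimal distances `Δ*(G)`. -/
def DeltaStar (G : Type*) [AddCommGroup G] : Set ℕ :=
  {d | ∃ G₀ : Set G, DeltaSet G₀ ≠ ∅ ∧ d = sInf (DeltaSet G₀)}

/-- `m(G)`: the maximum of `min Δ(G₀)` over non-half-factorial LCN-sets `G₀`. -/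
noncomputable def mConst (G : Type*) [AddCommGroup G] : ℕ :=
  sSup {d | ∃ G₀ : Set G, IsLCNSet G₀ ∧ DeltaSet G₀ ≠ ∅ ∧ d = sInf (DeltaSet G₀)}

/-- The rank of a finite abelian group: the maximal `k` such that `(ZMod p)^k`
embeds into `G` for some prime `p`. -/
noncomputable def grank (G : Type*) [AddCommGroup G] : ℕ :=
  sSup {k | ∃ p : ℕ, p.Prime ∧ ∃ f : (Fin k → ZMod p) →+ G, Function.Injective f}

/-- The system of sets of lengths `L(G)`. -/
def SystemSets (G : Type*) [AddCommGroup G] : Set (Set ℕ) :=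
  {L | ∃ B : Multiset G, B.sum = 0 ∧ L = LengthSet Set.univ B}

/-- The Davenport constant: the maximal length of a minimal zero-sum sequence. -/
noncomputable def DavenportC (G : Type*) [AddCommGroup G] : ℕ :=
  sSup {k | ∃ A : Multiset G, IsAtomSeq (Set.univ : Set G) A ∧ A.card = k}

theorem stmt_1 {G : Type*} [AddCommGroup G] [Fintype G] [DecidableEq G] (G₀ : Set G)
    (hG₀ : ∀ h ∈ G₀, ∀ h' ∈ G₀ \ {h}, h ∉ AddSubgroup.closure (G₀ \ {h, h'}))
    (A : Multiset G) (hA : IsAtomSeq G₀ A) (hsupp : {x : G | x ∈ A} ⊂ G₀)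
    (h : G) (hh : h ∈ A) :
    1 < Nat.gcd (A.count h) (addOrderOf h) := by
  classical
  have hhG₀ : h ∈ G₀ := hA.1.1 h hh
  obtain ⟨h', hh'G₀, hh'A⟩ : ∃ x ∈ G₀, x ∉ A := by
    by_contra hc
    push_neg at hc
    exact hsupp.2 (fun x hx => hc x hx)
  have hh'ne : h' ≠ h := fun e => hh'A (e ▸ hh)
  set n := A.count h with hn
  set d := addOrderOf h with hd
  have hdpos : 0 < d := addOrderOf_pos h
  set H := AddSubgroup.closure (G₀ \ {h, h'}) with hH
  have hnotin : h ∉ H := hG₀ h hhG₀ h' ⟨hh'G₀, hh'ne⟩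
  -- split A
  have hsplit : (A.filter (h = ·)) + (A.filter (¬ h = ·)) = A :=
    Multiset.filter_add_not _ A
  have hrep : A.filter (h = ·) = Multiset.replicate n h := by
    rw [Multiset.filter_eq, hn]
  have hBmem : ∀ g ∈ A.filter (¬ h = ·), g ∈ H := by
    intro g hg
    rw [Multiset.mem_filter] at hg
    apply AddSubgroup.subset_closure
    refine ⟨hA.1.1 g hg.1, ?_⟩
    intro hgin
    rcases hgin with rfl | rfl
    · exact hg.2 rfl
    · exact hh'A hg.1
  have hBsum : (A.filter (¬ h = ·)).sum ∈ H := AddSubgroup.multiset_sum_mem H _ hBmem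
  have hnh : n • h ∈ H := by
    have hsum0 : (n • h) + (A.filter (¬ h = ·)).sum = 0 := by
      have := hA.1.2
      calc (n • h) + (A.filter (¬ h = ·)).sum
          = (Multiset.replicate n h).sum + (A.filter (¬ h = ·)).sum := by
            rw [Multiset.sum_replicate]
        _ = ((A.filter (h = ·)) + (A.filter (¬ h = ·))).sum := by
            rw [Multiset.sum_add, hrep]
        _ = A.sum := by rw [hsplit]
        _ = 0 := this
    have : n • h = -(A.filter (¬ h = ·)).sum := by linear_combination (norm := abel) hsum0
    rw [this]
    exact neg_mem hBsum
  -- contradiction if gcd = 1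
  have hgcdne : Nat.gcd n d ≠ 1 := by
    intro hgcd
    apply hnotin
    have hbez : (1 : ℤ) = n * Nat.gcdA n d + d * Nat.gcdB n d := by
      have := Nat.gcd_eq_gcd_ab n d
      rw [hgcd] at this
      exact_mod_cast this
    have hdh : (d : ℤ) • h = 0 := by
      have : d • h = 0 := addOrderOf_nsmul_eq_zero h
      simpa using this
    have key : h = Nat.gcdA n d • ((n : ℤ) • h) + Nat.gcdB n d • ((d : ℤ) • h) := by
      rw [smul_smul, smul_smul, ← add_smul, mul_comm, mul_comm (Nat.gcdB n d), ← hbez,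
        one_zsmul]
    rw [key, hdh, smul_zero, add_zero]
    exact AddSubgroup.zsmul_mem H (by simpa using hnh) _
  have hgcdpos : 0 < Nat.gcd n d := Nat.gcd_pos_of_pos_right n hdpos
  omega
end

section
/- Let G be a finite abelian group, G₀ ⊆ G, and g ∈ G₀ with g ∈ ⟨G₀ \ {g}⟩. If ord(g) is a prime power, then there exists a subset E ⊆ G₀ \ {g} with |E| ≤ r(G) such that g ∈ ⟨E⟩. -/
/-!
Multiplying by the `p'`-part `m` of `|G|` sends `G₀ \ {g}` into the `p`-primary component, and
`g` lies in the cyclic group generated by `m • g` because `m` is prime to `ord g`. Inside the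
`p`-primary component, choose `E` inclusion-minimal with `m • g ∈ ⟨E⟩`. Then `E` generates
`H = ⟨E⟩` irredundantly, so by Nakayama's lemma for the `p`-group `H` its image in `H / pH` is
linearly independent over `𝔽_p`. Hence `|E| ≤ dim H / pH = dim H[p] ≤ r(G)`, the equality
because `x ↦ p • x` has kernel `H[p]` and cokernel `H / pH`. Finally `E` lifts to a subset of
`G₀ \ {g}` of the same size.
-/

open AddSubgroup Function Module

section

variable {G H : Type*} [AddCommGroup G] [AddCommGroup H]

theorem AddSubgroup.eq_top_of_forall_mem_add_nsmul {p a : ℕ} (hpa : ∀ x : H, p ^ a • x = 0)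
    {K : AddSubgroup H} (hK : ∀ x, ∃ k ∈ K, ∃ y, x = k + p • y) : K = ⊤ := by
  have hpow (j : ℕ) (x : H) : ∃ k ∈ K, ∃ y, x = k + p ^ j • y := by
    induction j generalizing x with
    | zero => exact ⟨0, K.zero_mem, x, by simp⟩
    | succ j ih =>
      obtain ⟨k, hk, y, rfl⟩ := ih x
      obtain ⟨k', hk', z, rfl⟩ := hK y
      exact ⟨k + p ^ j • k', K.add_mem hk (K.nsmul_mem hk' _), z, by
        rw [smul_add, smul_smul, ← pow_succ, add_assoc]⟩
  refine eq_top_iff.2 fun x _ => ?_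
  obtain ⟨k, hk, y, rfl⟩ := hpow a x
  simpa [hpa y] using hk

namespace ModN

instance finite [Finite H] {n : ℕ} : Finite (ModN H n) :=
  Finite.of_surjective _ (Submodule.mkQ_surjective _)

theorem mkQ_eq_zero_iff {n : ℕ} {x : H} : mkQ n x = 0 ↔ ∃ y, x = n • y := by
  change Submodule.Quotient.mk x = 0 ↔ _
  rw [Submodule.Quotient.mk_eq_zero, LinearMap.mem_range]
  simp only [LinearMap.lsmul_apply, natCast_zsmul]
  exact exists_congr fun y => eq_comm

theorem linearIndependent_mkQ_of_closure_diff_ne_top {p a : ℕ} [Fact p.Prime]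
    (hpa : ∀ x : H, p ^ a • x = 0) {S : Set H} (hS : closure S = ⊤)
    (hirr : ∀ e ∈ S, closure (S \ {e}) ≠ ⊤) :
    LinearIndependent (ZMod p) (fun e : S => mkQ p (e : H)) := by
  rw [linearIndependent_iff_notMem_span]
  rintro ⟨e, he⟩ hspan
  set K := closure (S \ {e})
  have hspan_le : Submodule.span (ZMod p)
      ((fun e : S => mkQ p (e : H)) '' (Set.univ \ {⟨e, he⟩})) ≤
        toZModSubmodule p (K.map (mkQ p)) := by
    rw [Submodule.span_le]
    rintro _ ⟨⟨s, hs⟩, hse, rfl⟩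
    exact mem_map_of_mem _ (subset_closure ⟨hs, fun h => hse.2 (Subtype.ext h)⟩)
  have hS_le : closure S ≤ K ⊔ (mkQ p).ker := by
    rw [closure_le]
    intro s hs
    by_cases hse : s = e
    · subst hse
      obtain ⟨k, hk, hks⟩ := mem_map.1 ((mem_toZModSubmodule p).1 (hspan_le hspan))
      exact mem_sup.2 ⟨k, hk, s - k, by simp [hks], add_sub_cancel _ _⟩
    · exact le_sup_left (a := K) (subset_closure ⟨hs, hse⟩)
  refine hirr e he (eq_top_of_forall_mem_add_nsmul hpa fun x => ?_)
  obtain ⟨k, hk, z, hz, rfl⟩ := mem_sup.1 (hS_le (hS ▸ mem_top x))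
  obtain ⟨y, rfl⟩ := mkQ_eq_zero_iff.1 hz
  exact ⟨k, hk, y, rfl⟩

theorem natCard_eq_natCard_torsionBy [Finite H] (n : ℕ) :
    Nat.card (ModN H n) = Nat.card (torsionBy H n) := by
  set φ := nsmulAddMonoidHom (α := H) n
  have hker : φ.ker = torsionBy H n := by ext; simp [φ]
  have hrange : φ.range = (LinearMap.range (LinearMap.lsmul ℤ H n)).toAddSubgroup := by
    ext; simp [φ]
  have hcard_ker := φ.ker.card_mul_index
  have hcard_range := φ.range.card_mul_index
  rw [index_ker] at hcard_ker
  have : Nat.card (ModN H n) = φ.range.index := by rw [hrange]; rfl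
  rw [this, ← hker]
  refine Nat.eq_of_mul_eq_mul_left (Nat.card_pos (α := φ.range)) ?_
  rw [hcard_range, ← hcard_ker, mul_comm]

end ModN

theorem le_grank_of_injective [Finite G] {p k : ℕ} (hp : p.Prime)
    {f : (Fin k → ZMod p) →+ G} (hf : Injective f) : k ≤ grank G := by
  refine le_csSup ⟨Nat.card G, ?_⟩ ⟨p, hp, f, hf⟩
  rintro j ⟨q, hq, f', hf'⟩
  have := Fact.mk hq
  calc j ≤ 2 ^ j := Nat.lt_two_pow_self.le
    _ ≤ q ^ j := Nat.pow_le_pow_left hq.two_le j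
    _ = Nat.card (Fin j → ZMod q) := by simp
    _ ≤ Nat.card G := Nat.card_le_card_of_injective f' hf'

theorem AddSubgroup.grank_le [Finite G] (K : AddSubgroup G) : grank K ≤ grank G :=
  csSup_le' fun _ ⟨_, hp, f, hf⟩ =>
    le_grank_of_injective hp (f := K.subtype.comp f) (Subtype.coe_injective.comp hf)

theorem ModN.finrank_le_grank [Finite H] {p : ℕ} [hp : Fact p.Prime] :
    finrank (ZMod p) (ModN H p) ≤ grank H := by
  let : Module (ZMod p) (torsionBy H p) := torsionBy.zmodModule
  have hfinrank : finrank (ZMod p) (ModN H p) = finrank (ZMod p) (torsionBy H p) := by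
    refine Nat.pow_right_injective hp.out.two_le ?_
    have h := natCard_eq_natCard_torsionBy (H := H) p
    rwa [Module.natCard_eq_pow_finrank (K := ZMod p) (V := ModN H p),
      Module.natCard_eq_pow_finrank (K := ZMod p) (V := torsionBy H p), Nat.card_zmod] at h
  let b := Module.finBasisOfFinrankEq (ZMod p) _ hfinrank.symm
  exact le_grank_of_injective hp.out
    (f := (torsionBy H p).subtype.comp b.equivFun.symm.toAddMonoidHom)
    (Subtype.coe_injective.comp b.equivFun.symm.injective)

theorem ncard_le_grank_of_closure_diff_ne [Finite G] {p a : ℕ} [Fact p.Prime] {S : Set G}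
    (hpa : ∀ x ∈ S, p ^ a • x = 0)
    (hirr : ∀ e ∈ S, AddSubgroup.closure (S \ {e}) ≠ AddSubgroup.closure S) :
    S.ncard ≤ grank G := by
  set K := closure S
  have hS_range : S ⊆ Set.range K.subtype := by
    rw [coe_subtype, Subtype.range_coe]
    exact subset_closure
  have hKpa (x : K) : p ^ a • x = 0 := by
    have : K ≤ (nsmulAddMonoidHom (p ^ a)).ker :=
      (closure_le _).2 fun x hx => by simpa using hpa x hx
    exact Subtype.ext (this x.2)
  have hirr' (e : K) (he : e ∈ K.subtype ⁻¹' S) :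
      closure (K.subtype ⁻¹' S \ {e}) ≠ ⊤ := by
    intro htop
    apply hirr e he
    have := congrArg (map K.subtype) htop
    rwa [AddMonoidHom.map_closure, ← AddMonoidHom.range_eq_map, range_subtype,
      Set.image_sdiff K.subtype_injective, Set.image_preimage_eq_of_subset hS_range,
      Set.image_singleton] at this
  have hindep :=
    ModN.linearIndependent_mkQ_of_closure_diff_ne_top hKpa (closure_preimage_eq_top S) hirr'
  have := Fintype.ofFinite (K.subtype ⁻¹' S)
  calc S.ncard = (K.subtype ⁻¹' S).ncard :=
        (Set.ncard_preimage_of_injective_subset_range K.subtype_injective hS_range).symm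
    _ = Fintype.card (K.subtype ⁻¹' S) := by
        rw [← Nat.card_coe_set_eq, Nat.card_eq_fintype_card]
    _ ≤ finrank (ZMod p) (ModN K p) := hindep.fintype_card_le_finrank
    _ ≤ grank K := ModN.finrank_le_grank
    _ ≤ grank G := K.grank_le

theorem exists_subset_ncard_le_grank_and_mem_closure [Finite G] {p a : ℕ} [Fact p.Prime]
    {T : Set G} (hT : ∀ x ∈ T, p ^ a • x = 0) {g : G} (hg : g ∈ AddSubgroup.closure T) :
    ∃ E ⊆ T, E.ncard ≤ grank G ∧ g ∈ AddSubgroup.closure E := by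
  obtain ⟨E, hET, hmin⟩ :=
    exists_minimal_le_of_wellFoundedLT (fun E => g ∈ AddSubgroup.closure E) T hg
  refine ⟨E, hET, ncard_le_grank_of_closure_diff_ne (fun x hx => hT x (hET hx))
    fun e he heq => ?_, hmin.prop⟩
  have hsub := hmin.le_of_le (y := E \ {e}) (by rw [heq]; exact hmin.prop) Set.sdiff_subset
  exact (hsub he).2 rfl

theorem mem_closure_of_nsmul_mem_closure_image {m : ℕ} {g : G} {s : Set G}
    (hm : m.Coprime (addOrderOf g)) (h : m • g ∈ AddSubgroup.closure ((m • ·) '' s)) :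
    g ∈ AddSubgroup.closure s := by
  have hle : AddSubgroup.closure ((m • ·) '' s) ≤ AddSubgroup.closure s :=
    (closure_le _).2 <| Set.image_subset_iff.2 fun x hx => nsmul_mem (subset_closure hx) m
  exact zmultiples_le.2 (hle h) (mem_zmultiples_nsmul_iff.2 hm)

end

theorem stmt_4_general {G : Type*} [AddCommGroup G] [Fintype G] (G₀ : Set G)
    (g : G) (hgen : g ∈ AddSubgroup.closure (G₀ \ {g}))
    (hpp : IsPrimePow (addOrderOf g)) :
    ∃ E : Set G, E ⊆ G₀ \ {g} ∧ E.ncard ≤ grank G ∧ g ∈ AddSubgroup.closure E := by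
  obtain ⟨p, k, hp, -, hord⟩ := hpp
  have := Fact.mk hp.nat_prime
  set n := Nat.card G
  set m := ordCompl[p] n
  have hkill : ∀ x ∈ (m • ·) '' (G₀ \ {g}), p ^ n.factorization p • x = 0 := by
    rintro _ ⟨x, -, rfl⟩
    rw [smul_smul, Nat.ordProj_mul_ordCompl_eq_self, card_nsmul_eq_zero']
  have hmg : m • g ∈ AddSubgroup.closure ((m • ·) '' (G₀ \ {g})) := by
    simpa [AddMonoidHom.map_closure] using mem_map_of_mem (nsmulAddMonoidHom (α := G) m) hgen
  obtain ⟨E, hE, hEcard, hmgE⟩ := exists_subset_ncard_le_grank_and_mem_closure hkill hmg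
  obtain ⟨E₀, hE₀, hbij⟩ := Set.SurjOn.exists_bijOn_subset hE
  have hm : m.Coprime (addOrderOf g) :=
    hord ▸ ((Nat.coprime_ordCompl hp.nat_prime (Nat.card_pos (α := G)).ne').pow_left k).symm
  refine ⟨E₀, hE₀, hbij.injOn.ncard_image ▸ hbij.image_eq ▸ hEcard, ?_⟩
  exact mem_closure_of_nsmul_mem_closure_image hm (hbij.image_eq ▸ hmgE)

theorem stmt_4 {G : Type*} [AddCommGroup G] [Fintype G] (G₀ : Set G)
    (g : G) (hg : g ∈ G₀) (hgen : g ∈ AddSubgroup.closure (G₀ \ {g}))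
    (hpp : IsPrimePow (addOrderOf g)) :
    ∃ E : Set G, E ⊆ G₀ \ {g} ∧ E.ncard ≤ grank G ∧ g ∈ AddSubgroup.closure E :=
  stmt_4_general G₀ g hgen hpp
end

section
/- If g is an element of order n ≥ 3 in a finite abelian group G, then the set G₀ = {g, −g} is non-half-factorial and min Δ(G₀) = n − 2; in particular, n − 2 ∈ Δ*(G). -/
open Multiset

lemma decomp2 {α : Type*} [DecidableEq α] {p q : α} (hpq : p ≠ q) (S : Multiset α)
    (h : ∀ x ∈ S, x = p ∨ x = q) :
    S = replicate (S.count p) p + replicate (S.count q) q := by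
  ext c
  rw [count_add, count_replicate, count_replicate]
  by_cases hp : p = c
  · subst hp; simp [Ne.symm hpq]
  by_cases hq : q = c
  · subst hq; simp [hpq, hp]
  · have hc : c ∉ S := fun hc => by rcases h c hc with rfl | rfl <;> simp_all
    simp [hp, hq, count_eq_zero.2 hc]

lemma decomp3 {α : Type*} [DecidableEq α] {p q r : α} (hpq : p ≠ q) (hpr : p ≠ r)
    (hqr : q ≠ r) (S : Multiset α) (h : ∀ x ∈ S, x = p ∨ x = q ∨ x = r) :
    S = replicate (S.count p) p + replicate (S.count q) q + replicate (S.count r) r := by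
  ext c
  rw [count_add, count_add, count_replicate, count_replicate, count_replicate]
  by_cases hp : p = c
  · subst hp; simp [Ne.symm hpq, Ne.symm hpr]
  by_cases hq : q = c
  · subst hq; simp [hpq, Ne.symm hqr, hp]
  by_cases hr : r = c
  · subst hr; simp [hpr, hqr, hp, hq]
  · have hc : c ∉ S := fun hc => by rcases h c hc with rfl | rfl | rfl <;> simp_all
    simp [hp, hq, hr, count_eq_zero.2 hc]

lemma key_arith {n a b x₁ y₁ z₁ x₂ y₂ z₂ : ℕ} (hn : 3 ≤ n)
    (e1 : x₁ + n * y₁ = a) (e2 : x₁ + n * z₁ = b)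
    (e3 : x₂ + n * y₂ = a) (e4 : x₂ + n * z₂ = b)
    (hlt : x₁ + y₁ + z₁ < x₂ + y₂ + z₂) :
    ∃ x' y' z' : ℕ, x' + n * y' = a ∧ x' + n * z' = b ∧
      x' + y' + z' = (x₁ + y₁ + z₁) + (n - 2) ∧
      (x₁ + y₁ + z₁) + (n - 2) ≤ x₂ + y₂ + z₂ := by
  have hn' : (3:ℤ) ≤ (n:ℤ) := by exact_mod_cast hn
  have E1 : (x₁:ℤ) + n * y₁ = a := by exact_mod_cast e1
  have E2 : (x₁:ℤ) + n * z₁ = b := by exact_mod_cast e2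
  have E3 : (x₂:ℤ) + n * y₂ = a := by exact_mod_cast e3
  have E4 : (x₂:ℤ) + n * z₂ = b := by exact_mod_cast e4
  have HLT : (x₁:ℤ) + y₁ + z₁ < x₂ + y₂ + z₂ := by exact_mod_cast hlt
  have hD : (y₂:ℤ) - y₁ = (z₂:ℤ) - z₁ := by
    have h1 : (n:ℤ) * ((y₂:ℤ) - y₁) = (n:ℤ) * ((z₂:ℤ) - z₁) := by
      have := E1.trans E3.symm
      have := E2.trans E4.symm
      ring_nf
      ring_nf at *
      linarith
    exact mul_left_cancel₀ (by linarith) h1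
  have hk : ((x₂:ℤ) + y₂ + z₂) - ((x₁:ℤ) + y₁ + z₁) = ((n:ℤ) - 2) * ((y₁:ℤ) - y₂) := by
    linear_combination E3 - E1 - hD
  have hy : (y₂:ℤ) < y₁ := by
    by_contra hc
    push_neg at hc
    nlinarith
  have hz : (z₂:ℤ) < z₁ := by linarith
  have hy1 : 1 ≤ y₁ := by exact_mod_cast (by linarith : (1:ℤ) ≤ y₁)
  have hz1 : 1 ≤ z₁ := by exact_mod_cast (by linarith : (1:ℤ) ≤ z₁)
  obtain ⟨y₀, rfl⟩ : ∃ y₀, y₁ = y₀ + 1 := ⟨y₁ - 1, by omega⟩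
  obtain ⟨z₀, rfl⟩ : ∃ z₀, z₁ = z₀ + 1 := ⟨z₁ - 1, by omega⟩
  have hprod : (0:ℤ) ≤ ((n:ℤ) - 2) * (((y₀:ℤ) + 1) - y₂ - 1) := by
    have h1 : (0:ℤ) ≤ (n:ℤ) - 2 := by linarith
    have h2 : (0:ℤ) ≤ ((y₀:ℤ) + 1) - y₂ - 1 := by push_cast at hy ⊢; linarith
    exact mul_nonneg h1 h2
  have hfin : (x₁:ℤ) + (y₀ + 1) + (z₀ + 1) + ((n:ℤ) - 2) ≤ (x₂:ℤ) + y₂ + z₂ := by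
    push_cast at hk ⊢
    nlinarith [hk, hprod]
  refine ⟨x₁ + n, y₀, z₀, ?_, ?_, by omega, ?_⟩
  · rw [mul_add, mul_one] at e1
    generalize n * y₀ = t at e1 ⊢
    omega
  · rw [mul_add, mul_one] at e2
    generalize n * z₀ = t at e2 ⊢
    omega
  · have : ((x₁ + (y₀ + 1) + (z₀ + 1)) + (n - 2) : ℤ) ≤ ((x₂ + y₂ + z₂ : ℕ) : ℤ) := by
      push_cast
      push_cast at hfin
      linarith
    have h2 : ((x₁ + (y₀ + 1) + (z₀ + 1) : ℕ) : ℤ) + ((n:ℤ) - 2) ≤ ((x₂ + y₂ + z₂ : ℕ) : ℤ) := by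
      push_cast; push_cast at this; linarith
    omega

open Multiset

section
variable {G : Type*} [AddCommGroup G] [DecidableEq G] {g : G} {n : ℕ}

lemma rep_ne_zero {α : Type*} (a : α) {n : ℕ} (h : n ≠ 0) : Multiset.replicate n a ≠ 0 := by
  intro hh
  have := congrArg Multiset.card hh
  simp at this
  omega

lemma hg_ne_zero (hord : addOrderOf g = n) (hn : 3 ≤ n) : g ≠ 0 := by
  intro h; rw [h, addOrderOf_zero] at hord; omega

lemma hg_ne_neg (hord : addOrderOf g = n) (hn : 3 ≤ n) : g ≠ -g := by
  intro h
  have h2 : (2 : ℕ) • g = 0 := by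
    rw [two_nsmul]; nth_rewrite 2 [h]; simp
  have := addOrderOf_dvd_of_nsmul_eq_zero h2
  rw [hord] at this
  have := Nat.le_of_dvd (by norm_num) this
  omega

lemma hng (hord : addOrderOf g = n) : n • g = 0 := by
  rw [← hord]; exact addOrderOf_nsmul_eq_zero g

lemma mem_pair_iff {x : G} : x ∈ ({g, -g} : Set G) ↔ x = g ∨ x = -g := by
  simp [Set.mem_insert_iff]

lemma atom_iff (hord : addOrderOf g = n) (hn : 3 ≤ n) (A : Multiset G) :
    IsAtomSeq ({g, -g} : Set G) A ↔
      A = ({g, -g} : Multiset G) ∨ A = replicate n g ∨ A = replicate n (-g) := by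
  have hne := hg_ne_neg hord hn
  have hg0 := hg_ne_zero hord hn
  have hngg : n • g = 0 := hng hord
  have hngneg : n • (-g) = 0 := by rw [smul_neg, hngg, neg_zero]
  have hnord : addOrderOf (-g) = n := by rw [addOrderOf_neg, hord]
  constructor
  · rintro ⟨⟨hmem, hsum⟩, hA0, hmin⟩
    have hmem' : ∀ x ∈ A, x = g ∨ x = -g := fun x hx => mem_pair_iff.1 (hmem x hx)
    have hdec := decomp2 hne A hmem'
    set a := A.count g with ha
    set b := A.count (-g) with hb
    by_cases hb0 : b = 0
    · -- A = replicate a g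
      right; left
      rw [hb0] at hdec; simp at hdec
      have hsum' : a • g = 0 := by rw [hdec, sum_replicate] at hsum; exact hsum
      have hdvd : n ∣ a := hord ▸ addOrderOf_dvd_of_nsmul_eq_zero hsum'
      have ha0 : a ≠ 0 := by
        intro h; rw [h] at hdec; simp at hdec; exact hA0 hdec
      have hna : n ≤ a := Nat.le_of_dvd (Nat.pos_of_ne_zero ha0) hdvd
      have hle : replicate n g ≤ A := by
        rw [hdec]; exact (replicate_le_replicate g).2 hna
      exact (hmin _ hle (rep_ne_zero _ (by omega)) (by rw [sum_replicate]; exact hngg)).symm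
    by_cases ha0 : a = 0
    · right; right
      rw [ha0] at hdec; simp at hdec
      have hsum' : b • (-g) = 0 := by rw [hdec, sum_replicate] at hsum; exact hsum
      have hdvd : n ∣ b := hnord ▸ addOrderOf_dvd_of_nsmul_eq_zero hsum'
      have hb0' : b ≠ 0 := by
        intro h; rw [h] at hdec; simp at hdec; exact hA0 hdec
      have hnb : n ≤ b := Nat.le_of_dvd (Nat.pos_of_ne_zero hb0') hdvd
      have hle : replicate n (-g) ≤ A := by
        rw [hdec]; exact (replicate_le_replicate (-g)).2 hnb
      exact (hmin _ hle (rep_ne_zero _ (by omega)) (by rw [sum_replicate]; exact hngneg)).symm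
    · left
      have hle : ({g, -g} : Multiset G) ≤ A := by
        rw [le_iff_count]
        intro c
        by_cases hc : c = g
        · rw [hc]
          have h1 : count g ({g, -g} : Multiset G) = 1 := by
            rw [insert_eq_cons, count_cons, count_singleton]
            simp [hne]
          rw [h1]; omega
        by_cases hc' : c = -g
        · rw [hc']
          have h1 : count (-g) ({g, -g} : Multiset G) = 1 := by
            rw [insert_eq_cons, count_cons, count_singleton]
            simp [Ne.symm hne]
          rw [h1]; omega
        · have : count c ({g, -g} : Multiset G) = 0 := by
            rw [count_eq_zero]; simp [hc, hc']
          rw [this]; omega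
      exact (hmin _ hle (by simp) (by simp)).symm
  · have pair_atom : IsAtomSeq ({g, -g} : Set G) ({g, -g} : Multiset G) := by
      refine ⟨⟨by intro x hx; simp at hx; rcases hx with rfl | rfl <;> simp [mem_pair_iff], by simp⟩,
        by simp, ?_⟩
      intro B hB hB0 hBsum
      have hmemB : ∀ x ∈ B, x = g ∨ x = -g := by
        intro x hx
        have := mem_of_le hB hx
        simpa using this
      have hdec := decomp2 (hg_ne_neg hord hn) B hmemB
      have hcg : B.count g ≤ 1 := by
        have := (le_iff_count.1 hB) g
        have h1 : count g ({g, -g} : Multiset G) = 1 := by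
          rw [insert_eq_cons, count_cons, count_singleton]; simp [hne]
        omega
      have hcng : B.count (-g) ≤ 1 := by
        have := (le_iff_count.1 hB) (-g)
        have h1 : count (-g) ({g, -g} : Multiset G) = 1 := by
          rw [insert_eq_cons, count_cons, count_singleton]; simp [Ne.symm hne]
        omega
      interval_cases h1 : B.count g <;> interval_cases h2 : B.count (-g) <;> simp at hdec
      · exact absurd hdec hB0
      · rw [hdec] at hBsum; simp at hBsum
        exact absurd hBsum (by simpa using hg0)
      · rw [hdec] at hBsum; simp at hBsum
        exact absurd hBsum hg0
      · exact hdec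
    have rep_atom : ∀ h : G, h = g ∨ h = -g → addOrderOf h = n →
        IsAtomSeq ({g, -g} : Set G) (replicate n h) := by
      intro h hh hhord
      refine ⟨⟨by intro x hx; rw [eq_of_mem_replicate hx]; rcases hh with rfl | rfl <;>
        simp [mem_pair_iff], by rw [sum_replicate, ← hhord]; exact addOrderOf_nsmul_eq_zero h⟩,
        rep_ne_zero _ (by omega), ?_⟩
      intro B hB hB0 hBsum
      have hrep : B = replicate (Multiset.card B) h :=
        eq_replicate_card.2 fun b hb => eq_of_mem_replicate (mem_of_le hB hb)
      have hcard : Multiset.card B ≤ n := by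
        have := card_le_card hB
        simpa using this
      have hsum' : (Multiset.card B) • h = 0 := by rw [hrep, sum_replicate] at hBsum; exact hBsum
      have hdvd : n ∣ Multiset.card B := hhord ▸ addOrderOf_dvd_of_nsmul_eq_zero hsum'
      have hcard0 : Multiset.card B ≠ 0 := by simpa using hB0
      have : Multiset.card B = n := by
        have := Nat.le_of_dvd (Nat.pos_of_ne_zero hcard0) hdvd
        omega
      rw [hrep, this]
    rintro (rfl | rfl | rfl)
    · exact pair_atom
    · exact rep_atom g (Or.inl rfl) hord
    · exact rep_atom (-g) (Or.inr rfl) hnord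

end
section
variable {G : Type*} [AddCommGroup G] [DecidableEq G] {g : G} {n : ℕ}

lemma length_iff (hord : addOrderOf g = n) (hn : 3 ≤ n) (B : Multiset G)
    (hB : ∀ x ∈ B, x = g ∨ x = -g) (k : ℕ) :
    k ∈ LengthSet ({g, -g} : Set G) B ↔
      ∃ x y z : ℕ, x + n * y = B.count g ∧ x + n * z = B.count (-g) ∧ x + y + z = k := by
  have hne := hg_ne_neg hord hn
  have hg0 := hg_ne_zero hord hn
  set P : Multiset G := {g, -g} with hP
  set Q1 : Multiset G := replicate n g with hQ1
  set Q2 : Multiset G := replicate n (-g) with hQ2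
  have hcountP_g : count g P = 1 := by
    rw [hP, insert_eq_cons, count_cons, count_singleton]; simp [hne]
  have hcountP_ng : count (-g) P = 1 := by
    rw [hP, insert_eq_cons, count_cons, count_singleton]; simp [Ne.symm hne]
  have hcountQ1_g : count g Q1 = n := by rw [hQ1, count_replicate]; simp
  have hcountQ1_ng : count (-g) Q1 = 0 := by rw [hQ1, count_replicate]; simp [hne]
  have hcountQ2_g : count g Q2 = 0 := by rw [hQ2, count_replicate]; simp [Ne.symm hne]
  have hcountQ2_ng : count (-g) Q2 = n := by rw [hQ2, count_replicate]; simp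
  have hPQ1 : P ≠ Q1 := fun h => by
    rw [h] at hcountP_ng; rw [hcountP_ng] at hcountQ1_ng; omega
  have hPQ2 : P ≠ Q2 := fun h => by
    rw [h] at hcountP_g; rw [hcountP_g] at hcountQ2_g; omega
  have hQ1Q2 : Q1 ≠ Q2 := fun h => by
    rw [h] at hcountQ1_g; rw [hcountQ1_g] at hcountQ2_g; omega
  constructor
  · rintro ⟨F, hcard, hatoms, hsum⟩
    have hF : ∀ A ∈ F, A = P ∨ A = Q1 ∨ A = Q2 := fun A hA =>
      (atom_iff hord hn A).1 (hatoms A hA)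
    have hdec := decomp3 hPQ1 hPQ2 hQ1Q2 F hF
    set x := F.count P
    set y := F.count Q1
    set z := F.count Q2
    refine ⟨x, y, z, ?_, ?_, ?_⟩
    · have := congrArg (count g) hsum
      rw [hdec] at this
      rw [← this]
      rw [Multiset.sum_add, Multiset.sum_add, Multiset.sum_replicate, Multiset.sum_replicate,
        Multiset.sum_replicate]
      rw [count_add, count_add, count_nsmul, count_nsmul, count_nsmul,
        hcountP_g, hcountQ1_g, hcountQ2_g]
      ring
    · have := congrArg (count (-g)) hsum
      rw [hdec] at this
      rw [← this]
      rw [Multiset.sum_add, Multiset.sum_add, Multiset.sum_replicate, Multiset.sum_replicate,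
        Multiset.sum_replicate]
      rw [count_add, count_add, count_nsmul, count_nsmul, count_nsmul,
        hcountP_ng, hcountQ1_ng, hcountQ2_ng]
      ring
    · have := congrArg Multiset.card hdec
      rw [hcard] at this
      simp at this
      omega
  · rintro ⟨x, y, z, hx, hz, hk⟩
    refine ⟨replicate x P + replicate y Q1 + replicate z Q2, by simp; omega, ?_, ?_⟩
    · intro A hA
      rw [atom_iff hord hn A]
      simp only [Multiset.mem_add] at hA
      rcases hA with (hA | hA) | hA
      · left; exact eq_of_mem_replicate hA
      · right; left; exact eq_of_mem_replicate hA
      · right; right; exact eq_of_mem_replicate hA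
    · rw [Multiset.sum_add, Multiset.sum_add, Multiset.sum_replicate, Multiset.sum_replicate,
        Multiset.sum_replicate]
      ext c
      rw [count_add, count_add, count_nsmul, count_nsmul, count_nsmul]
      by_cases hc : c = g
      · rw [hc, hcountP_g, hcountQ1_g, hcountQ2_g, ← hx]; ring
      by_cases hc' : c = -g
      · rw [hc', hcountP_ng, hcountQ1_ng, hcountQ2_ng, ← hz]; ring
      · have hcB : count c B = 0 := count_eq_zero.2 fun hcc => by
          rcases hB c hcc with rfl | rfl <;> simp_all
        have hcP : count c P = 0 := by
          rw [count_eq_zero]; rw [hP]; simp [hc, hc']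
        have hcQ1 : count c Q1 = 0 := by
          rw [count_eq_zero]; rw [hQ1]
          intro hm; exact hc (eq_of_mem_replicate hm)
        have hcQ2 : count c Q2 = 0 := by
          rw [count_eq_zero]; rw [hQ2]
          intro hm; exact hc' (eq_of_mem_replicate hm)
        rw [hcP, hcQ1, hcQ2, hcB]; ring

end

theorem stmt_5 {G : Type*} [AddCommGroup G] [Fintype G] (g : G) (n : ℕ)
    (hord : addOrderOf g = n) (hn : 3 ≤ n) :
    DeltaSet ({g, -g} : Set G) ≠ ∅ ∧
    sInf (DeltaSet ({g, -g} : Set G)) = n - 2 ∧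
    n - 2 ∈ DeltaStar G := by
  classical
  have hne := hg_ne_neg hord hn
  have hngg : n • g = 0 := hng hord
  set B₀ : Multiset G := replicate n g + replicate n (-g) with hB₀
  have hc1 : count g B₀ = n := by
    rw [hB₀, count_add, count_replicate, count_replicate]
    simp [hne, Ne.symm hne]
  have hc2 : count (-g) B₀ = n := by
    rw [hB₀, count_add, count_replicate, count_replicate]
    simp [hne, Ne.symm hne]
  have hB₀mem : ∀ x ∈ B₀, x = g ∨ x = -g := by
    intro x hx
    rw [hB₀, Multiset.mem_add] at hx
    rcases hx with hx | hx
    · left; exact eq_of_mem_replicate hx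
    · right; exact eq_of_mem_replicate hx
  have hB₀zs : IsZeroSumSeq ({g, -g} : Set G) B₀ := by
    refine ⟨fun x hx => mem_pair_iff.2 (hB₀mem x hx), ?_⟩
    rw [hB₀, Multiset.sum_add, Multiset.sum_replicate, Multiset.sum_replicate, smul_neg, hngg]
    simp
  have h2mem : 2 ∈ LengthSet ({g, -g} : Set G) B₀ :=
    (length_iff hord hn B₀ hB₀mem 2).2 ⟨0, 1, 1, by rw [hc1]; ring, by rw [hc2]; ring, rfl⟩
  have hnmem : n ∈ LengthSet ({g, -g} : Set G) B₀ :=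
    (length_iff hord hn B₀ hB₀mem n).2 ⟨n, 0, 0, by rw [hc1]; ring, by rw [hc2]; ring, by omega⟩
  have hmemΔ : n - 2 ∈ DeltaSet ({g, -g} : Set G) := by
    refine ⟨B₀, hB₀zs, 2, n, h2mem, hnmem, by omega, rfl, ?_⟩
    rintro c hc ⟨h2c, hcn⟩
    obtain ⟨x, y, z, hx, hz, hk⟩ := (length_iff hord hn B₀ hB₀mem c).1 hc
    rw [hc1] at hx
    rw [hc2] at hz
    match y, z with
    | 0, 0 => omega
    | 0, zz + 1 =>
      have : n * 1 ≤ n * (zz + 1) := Nat.mul_le_mul_left n (by omega)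
      omega
    | yy + 1, 0 =>
      have : n * 1 ≤ n * (yy + 1) := Nat.mul_le_mul_left n (by omega)
      omega
    | yy + 1, zz + 1 =>
      have h1 : n * 1 ≤ n * (yy + 1) := Nat.mul_le_mul_left n (by omega)
      have h2 : n * 1 ≤ n * (zz + 1) := Nat.mul_le_mul_left n (by omega)
      have h3 : yy = 0 := by
        by_contra hyy
        have : n * 2 ≤ n * (yy + 1) := Nat.mul_le_mul_left n (by omega)
        omega
      have h4 : zz = 0 := by
        by_contra hzz
        have : n * 2 ≤ n * (zz + 1) := Nat.mul_le_mul_left n (by omega)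
        omega
      subst h3; subst h4
      omega
  have hsub : DeltaSet ({g, -g} : Set G) ⊆ {n - 2} := by
    rintro d ⟨B, hB, a, b, ha, hb, hab, hd, hcons⟩
    have hBmem : ∀ x ∈ B, x = g ∨ x = -g := fun x hx => mem_pair_iff.1 (hB.1 x hx)
    obtain ⟨x₁, y₁, z₁, e1, e2, hk1⟩ := (length_iff hord hn B hBmem a).1 ha
    obtain ⟨x₂, y₂, z₂, e3, e4, hk2⟩ := (length_iff hord hn B hBmem b).1 hb
    obtain ⟨x', y', z', f1, f2, f3, f4⟩ := key_arith hn e1 e2 e3 e4 (by omega)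
    have hmem' : a + (n - 2) ∈ LengthSet ({g, -g} : Set G) B :=
      (length_iff hord hn B hBmem _).2 ⟨x', y', z', f1, f2, by omega⟩
    have hnc := hcons _ hmem'
    simp only [Set.mem_singleton_iff]
    omega
  have hΔeq : DeltaSet ({g, -g} : Set G) = {n - 2} :=
    Set.Subset.antisymm hsub (by rintro d rfl; exact hmemΔ)
  have hnempty : DeltaSet ({g, -g} : Set G) ≠ ∅ := by
    rw [hΔeq]; exact Set.singleton_ne_empty _
  have hsinf : sInf (DeltaSet ({g, -g} : Set G)) = n - 2 := by
    rw [hΔeq]; exact csInf_singleton _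
  exact ⟨hnempty, hsinf, ⟨{g, -g}, hnempty, hsinf.symm⟩⟩
end

section
/- Let G be a finite abelian group and G₀ ⊆ G a non-half-factorial LCN-set. Then min Δ(G₀) ≤ |G₀| − 2. -/
section Helpers

variable {G : Type*} [AddCommGroup G]

private lemma crossNum_add' (a b : Multiset G) :
    crossNum (a + b) = crossNum a + crossNum b := by
  simp [crossNum]

private lemma crossNum_zero' : crossNum (0 : Multiset G) = 0 := by simp [crossNum]

private lemma crossNum_sum' (F : Multiset (Multiset G)) :
    crossNum F.sum = (F.map crossNum).sum := by
  induction F using Multiset.induction with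
  | empty => simp [crossNum]
  | cons a s ih => simp [crossNum_add', ih]

private lemma crossNum_replicate' (n : ℕ) (g : G) :
    crossNum (Multiset.replicate n g) = (n : ℚ) / (addOrderOf g : ℚ) := by
  simp [crossNum, Multiset.map_replicate, Multiset.sum_replicate, nsmul_eq_mul]
  ring

private lemma msum_sum (F : Multiset (Multiset G)) :
    F.sum.sum = (F.map Multiset.sum).sum := by
  induction F using Multiset.induction with
  | empty => simp
  | cons a s ih => simp [ih]

private lemma mem_msum {F : Multiset (Multiset G)} {x : G} (hx : x ∈ F.sum) :
    ∃ A ∈ F, x ∈ A := by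
  induction F using Multiset.induction with
  | empty => simp at hx
  | cons a s ih =>
    rw [Multiset.sum_cons, Multiset.mem_add] at hx
    rcases hx with h | h
    · exact ⟨a, Multiset.mem_cons_self a s, h⟩
    · obtain ⟨A, hA, hxA⟩ := ih h
      exact ⟨A, Multiset.mem_cons_of_mem hA, hxA⟩

variable [Fintype G] [DecidableEq G]

private lemma atom_replicate' {G₀ : Set G} {g : G} (hg : g ∈ G₀) :
    IsAtomSeq G₀ (Multiset.replicate (addOrderOf g) g) := by
  have hpos : 0 < addOrderOf g := addOrderOf_pos g
  refine ⟨⟨fun x hx => ?_, ?_⟩, ?_, ?_⟩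
  · rw [Multiset.eq_of_mem_replicate hx]; exact hg
  · rw [Multiset.sum_replicate, addOrderOf_nsmul_eq_zero]
  · exact Multiset.card_pos.1 (by simp [hpos]) -- check name
  · intro B hB hBne hBsum
    have hall : ∀ x ∈ B, x = g := fun x hx =>
      Multiset.eq_of_mem_replicate (Multiset.mem_of_le hB hx)
    have hBrep : B = Multiset.replicate B.card g := Multiset.eq_replicate_card.2 hall
    have hcard : B.card ≤ addOrderOf g := by
      have := Multiset.card_le_card hB
      simpa using this
    have hdvd : addOrderOf g ∣ B.card := by
      rw [addOrderOf_dvd_iff_nsmul_eq_zero]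
      rw [hBrep, Multiset.sum_replicate] at hBsum
      simpa using hBsum
    have hcpos : 0 < B.card := Multiset.card_pos.2 hBne
    have : addOrderOf g ≤ B.card := Nat.le_of_dvd hcpos hdvd
    rw [hBrep, le_antisymm hcard this]

private lemma count_le_of_atom {G₀ : Set G} {U : Multiset G} (hU : IsAtomSeq G₀ U)
    (g : G) : U.count g ≤ addOrderOf g := by
  by_contra h
  push_neg at h
  have hle : Multiset.replicate (addOrderOf g) g ≤ U :=
    Multiset.le_count_iff_replicate_le.1 h.le
  have hpos : 0 < addOrderOf g := addOrderOf_pos g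
  have := hU.2.2 _ hle (Multiset.card_pos.1 (by simp [hpos]))
    (by rw [Multiset.sum_replicate, addOrderOf_nsmul_eq_zero])
  have : U.count g = addOrderOf g := by
    rw [← this, Multiset.count_replicate_self]
  omega

private lemma exists_factorization (G₀ : Set G) (S : Multiset G)
    (h1 : ∀ g ∈ S, g ∈ G₀) (h2 : S.sum = 0) (h3 : S ≠ 0) :
    ∃ F : Multiset (Multiset G), (∀ A ∈ F, IsAtomSeq G₀ A) ∧ F.sum = S := by
  induction S using Multiset.strongInductionOn with
  | ih S ih =>
  by_cases hA : IsAtomSeq G₀ S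
  · exact ⟨{S}, by simpa using hA, by simp⟩
  · unfold IsAtomSeq at hA
    push_neg at hA
    obtain ⟨B, hBle, hBne, hBsum, hBneq⟩ := hA ⟨h1, h2⟩ h3
    have hlt1 : B < S := lt_of_le_of_ne hBle hBneq
    have hcardB : 0 < B.card := Multiset.card_pos.2 hBne
    have hSB : B + (S - B) = S := add_tsub_cancel_of_le hBle
    have hlt2 : S - B < S := by
      refine lt_of_le_of_ne tsub_le_self fun hEq => ?_
      have := congrArg Multiset.card hSB
      rw [Multiset.card_add, hEq] at this
      omega
    have hne2 : S - B ≠ 0 := by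
      intro h0
      rw [h0, add_zero] at hSB
      exact hBneq hSB
    have hsum2 : (S - B).sum = 0 := by
      have := congrArg Multiset.sum hSB
      rw [Multiset.sum_add, hBsum, zero_add] at this
      rw [this, h2]
    obtain ⟨F₁, hF₁, hF₁sum⟩ := ih B hlt1
      (fun g hg => h1 g (Multiset.mem_of_le hBle hg)) hBsum hBne
    obtain ⟨F₂, hF₂, hF₂sum⟩ := ih (S - B) hlt2
      (fun g hg => h1 g (Multiset.mem_of_le tsub_le_self hg)) hsum2 hne2
    refine ⟨F₁ + F₂, fun A hA => ?_, by rw [Multiset.sum_add, hF₁sum, hF₂sum, hSB]⟩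
    rcases Multiset.mem_add.1 hA with h | h
    · exact hF₁ A h
    · exact hF₂ A h

private lemma gap_lemma (L : Set ℕ) {x y : ℕ} (hx : x ∈ L) (hy : y ∈ L) (hxy : x < y) :
    ∃ d ∈ DistSet L, d ≤ y - x := by
  classical
  set T : Finset ℕ := (Finset.Icc x y).filter (· ∈ L) with hT
  have hxT : x ∈ T := by simp [hT, hx, hxy.le]
  have hyT : y ∈ T := by simp [hT, hy, hxy.le]
  set T' := T.filter (· < y) with hT'
  have hT'ne : T'.Nonempty := ⟨x, by simp [hT', hxT, hxy]⟩
  set a := T'.max' hT'ne with ha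
  have haT' : a ∈ T' := T'.max'_mem hT'ne
  have haT : a ∈ T := Finset.mem_of_mem_filter a haT'
  have haL : a ∈ L := (Finset.mem_filter.1 haT).2
  have hay : a < y := (Finset.mem_filter.1 haT').2
  have hax : x ≤ a := (Finset.mem_Icc.1 (Finset.mem_filter.1 haT).1).1
  set Tb := T.filter (a < ·) with hTb
  have hTbne : Tb.Nonempty := ⟨y, by simp [hTb, hyT, hay]⟩
  set b := Tb.min' hTbne with hb
  have hbTb : b ∈ Tb := Tb.min'_mem hTbne
  have hbT : b ∈ T := Finset.mem_of_mem_filter b hbTb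
  have hbL : b ∈ L := (Finset.mem_filter.1 hbT).2
  have hab : a < b := (Finset.mem_filter.1 hbTb).2
  have hby : b ≤ y := (Finset.mem_Icc.1 (Finset.mem_filter.1 hbT).1).2
  refine ⟨b - a, ⟨a, b, haL, hbL, hab, rfl, ?_⟩, tsub_le_tsub hby hax⟩
  rintro c hc ⟨h1, h2⟩
  have hcT : c ∈ T := by
    rw [hT, Finset.mem_filter, Finset.mem_Icc]
    exact ⟨⟨hax.trans h1.le, (h2.le.trans hby)⟩, hc⟩
  have : b ≤ c := Tb.min'_le c (Finset.mem_filter.2 ⟨hcT, h1⟩)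
  omega

end Helpers

section Main

variable {G : Type*} [AddCommGroup G] [Fintype G]

private lemma exists_big_atom {G₀ : Set G} (hlcn : IsLCNSet G₀) (hnhf : DeltaSet G₀ ≠ ∅) :
    ∃ U : Multiset G, IsAtomSeq G₀ U ∧ 1 < crossNum U := by
  obtain ⟨d₀, B, hB, a, b, ha, hb, hab, -, -⟩ := Set.nonempty_iff_ne_empty.2 hnhf
  obtain ⟨F₁, hc₁, hat₁, hs₁⟩ := ha
  obtain ⟨F₂, hc₂, hat₂, hs₂⟩ := hb
  by_contra h
  push_neg at h
  have hle1 : (F₁.map crossNum).sum ≤ (a : ℚ) := by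
    have := Multiset.sum_le_card_nsmul (F₁.map crossNum) 1 (by
      intro x hx
      obtain ⟨A, hA, rfl⟩ := Multiset.mem_map.1 hx
      exact h A (hat₁ A hA))
    simpa [hc₁] using this
  have hle2 : (b : ℚ) ≤ (F₂.map crossNum).sum := by
    have := Multiset.card_nsmul_le_sum (s := F₂.map crossNum) (a := (1 : ℚ)) (by
      intro x hx
      obtain ⟨A, hA, rfl⟩ := Multiset.mem_map.1 hx
      exact hlcn A (hat₂ A hA))
    simpa [hc₂] using this
  have heq : (F₁.map crossNum).sum = (F₂.map crossNum).sum := by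
    rw [← crossNum_sum', ← crossNum_sum', hs₁, hs₂]
  have : (b : ℚ) ≤ (a : ℚ) := le_trans hle2 (heq ▸ hle1)
  exact absurd (Nat.cast_le.1 this) (by omega)

end Main

theorem stmt_6' {G : Type*} [AddCommGroup G] [Fintype G] (G₀ : Set G)
    (hlcn : IsLCNSet G₀) (hnhf : DeltaSet G₀ ≠ ∅) :
    sInf (DeltaSet G₀) ≤ G₀.ncard - 2 := by
  classical
  obtain ⟨U, hU, hUk⟩ := exists_big_atom hlcn hnhf
  have hUne : U ≠ 0 := hU.2.1
  set s := U.toFinset.card with hs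
  -- s ≥ 2
  have hs2 : 2 ≤ s := by
    by_contra hcon
    push_neg at hcon
    have h1 : U.toFinset.Nonempty := by
      obtain ⟨g, hg⟩ := Multiset.exists_mem_of_ne_zero hUne
      exact ⟨g, Multiset.mem_toFinset.2 hg⟩
    have hs1 : s = 1 := by
      have := Finset.card_pos.2 h1
      omega
    obtain ⟨g, hgeq⟩ := Finset.card_eq_one.1 hs1
    have hall : ∀ x ∈ U, x = g := fun x hx => by
      have hx' : x ∈ U.toFinset := Multiset.mem_toFinset.2 hx
      rw [hgeq] at hx'
      simpa using hx'
    have hrep : U = Multiset.replicate U.card g := Multiset.eq_replicate_card.2 hall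
    have hcount : U.count g = U.card := by rw [hrep]; simp
    have hle : U.card ≤ addOrderOf g := hcount ▸ count_le_of_atom hU g
    have hdvd : addOrderOf g ∣ U.card := by
      rw [addOrderOf_dvd_iff_nsmul_eq_zero]
      have h0 := hU.1.2
      rw [hrep, Multiset.sum_replicate] at h0
      simpa [Multiset.card_replicate] using h0
    have hpos : 0 < U.card := Multiset.card_pos.2 hUne
    have heq : U.card = addOrderOf g := le_antisymm hle (Nat.le_of_dvd hpos hdvd)
    rw [hrep, crossNum_replicate', heq, div_self
      (Nat.cast_ne_zero.2 (addOrderOf_pos g).ne')] at hUk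
    exact lt_irrefl _ hUk
  -- the sequence W
  set W : Multiset G := ∑ g ∈ U.toFinset, Multiset.replicate (addOrderOf g) g with hW
  set F₀ : Multiset (Multiset G) :=
    U.toFinset.val.map (fun g => Multiset.replicate (addOrderOf g) g) with hF₀
  have hF₀sum : F₀.sum = W := (Finset.sum_eq_multiset_sum _ _).symm
  have hmemU : ∀ g ∈ U, g ∈ G₀ := hU.1.1
  have hcW : ∀ g ∈ U.toFinset, W.count g = addOrderOf g := by
    intro g hg
    rw [hW, Multiset.count_sum']
    simp only [Multiset.count_replicate]
    rw [Finset.sum_ite_eq']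
    simp [hg]
  have hUleW : U ≤ W := by
    rw [Multiset.le_iff_count]
    intro g
    by_cases hg : g ∈ U
    · rw [hcW g (Multiset.mem_toFinset.2 hg)]
      exact count_le_of_atom hU g
    · simp [Multiset.count_eq_zero_of_notMem hg]
  have hWmem : ∀ x ∈ W, x ∈ G₀ := by
    intro x hx
    rw [← hF₀sum] at hx
    obtain ⟨A, hA, hxA⟩ := mem_msum hx
    obtain ⟨g, hg, rfl⟩ := Multiset.mem_map.1 hA
    rw [Multiset.eq_of_mem_replicate hxA]
    exact hmemU g (Multiset.mem_toFinset.1 hg)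
  have hWsum : W.sum = 0 := by
    rw [← hF₀sum, msum_sum]
    refine Multiset.sum_eq_zero ?_
    intro x hx
    obtain ⟨A, hA, rfl⟩ := Multiset.mem_map.1 hx
    obtain ⟨g, hg, rfl⟩ := Multiset.mem_map.1 hA
    rw [Multiset.sum_replicate, addOrderOf_nsmul_eq_zero]
  have hWzs : IsZeroSumSeq G₀ W := ⟨hWmem, hWsum⟩
  have hF₀atoms : ∀ A ∈ F₀, IsAtomSeq G₀ A := by
    intro A hA
    obtain ⟨g, hg, rfl⟩ := Multiset.mem_map.1 hA
    exact atom_replicate' (hmemU g (Multiset.mem_toFinset.1 hg))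
  have hsW : s ∈ LengthSet G₀ W := ⟨F₀, by simp [hF₀, hs, Finset.card, Multiset.toFinset_val], hF₀atoms, hF₀sum⟩
  have hkW : crossNum W = (s : ℚ) := by
    rw [← hF₀sum, crossNum_sum']
    have hmap : F₀.map crossNum = Multiset.replicate s 1 := by
      refine Multiset.eq_replicate.2 ⟨by simp [hF₀, hs, Finset.card, Multiset.toFinset_val], ?_⟩
      intro x hx
      obtain ⟨A, hA, rfl⟩ := Multiset.mem_map.1 hx
      obtain ⟨g, hg, rfl⟩ := Multiset.mem_map.1 hA
      rw [crossNum_replicate', div_self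
        (Nat.cast_ne_zero.2 (addOrderOf_pos g).ne')]
    rw [hmap, Multiset.sum_replicate, nsmul_eq_mul, mul_one]
  -- W' = W - U
  set W' : Multiset G := W - U with hW'
  have hW'U : W' + U = W := tsub_add_cancel_of_le hUleW
  have hW'sum : W'.sum = 0 := by
    have h0 := congrArg Multiset.sum hW'U
    rw [Multiset.sum_add, hU.1.2, add_zero, hWsum] at h0
    exact h0
  have hW'mem : ∀ x ∈ W', x ∈ G₀ := fun x hx =>
    hWmem x (Multiset.mem_of_le tsub_le_self hx)
  have hW'ne : W' ≠ 0 := by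
    intro h0
    have hUW : U = W := le_antisymm hUleW (tsub_eq_zero_iff_le.1 h0)
    obtain ⟨g₁, hg₁, g₂, hg₂, hne⟩ := Finset.one_lt_card.1 hs2
    have hBle : Multiset.replicate (addOrderOf g₁) g₁ ≤ U := by
      refine Multiset.le_count_iff_replicate_le.1 ?_
      rw [hUW, hcW g₁ hg₁]
    have hBeq := hU.2.2 _ hBle
      (Multiset.card_pos.1 (by simp [addOrderOf_pos g₁]))
      (by rw [Multiset.sum_replicate, addOrderOf_nsmul_eq_zero])
    have hg₂U : g₂ ∈ U := Multiset.mem_toFinset.1 hg₂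
    rw [← hBeq] at hg₂U
    exact hne (Multiset.eq_of_mem_replicate hg₂U).symm
  obtain ⟨F', hF'at, hF'sum⟩ := exists_factorization G₀ W' hW'mem hW'sum hW'ne
  set l := F'.card with hl
  have hl1 : 1 ≤ l := by
    rcases Multiset.empty_or_exists_mem F' with h | ⟨A, hA⟩
    · rw [h] at hF'sum; simp at hF'sum; exact absurd hF'sum.symm hW'ne
    · have : 0 < F'.card := Multiset.card_pos.2 (by rintro rfl; simp at hA)
      omega
  have hkW' : crossNum W' + crossNum U = (s : ℚ) := by
    rw [← hkW, ← hW'U, crossNum_add']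
  have hlle : (l : ℚ) ≤ crossNum W' := by
    have := Multiset.card_nsmul_le_sum (s := F'.map crossNum) (a := (1 : ℚ)) (by
      intro x hx
      obtain ⟨A, hA, rfl⟩ := Multiset.mem_map.1 hx
      exact hlcn A (hF'at A hA))
    rw [← crossNum_sum', hF'sum] at this
    simpa [hl] using this
  have hlts : l + 1 < s := by
    have hq : ((l + 1 : ℕ) : ℚ) < (s : ℚ) := by
      push_cast
      linarith
    exact_mod_cast hq
  have hlW : l + 1 ∈ LengthSet G₀ W :=
    ⟨U ::ₘ F', by simp [hl], by
      intro A hA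
      rcases Multiset.mem_cons.1 hA with rfl | h
      · exact hU
      · exact hF'at A h,
     by rw [Multiset.sum_cons, hF'sum, add_comm, hW'U]⟩
  obtain ⟨d, hdDist, hdle⟩ := gap_lemma (LengthSet G₀ W) hlW hsW hlts
  have hdDelta : d ∈ DeltaSet G₀ := ⟨W, hWzs, hdDist⟩
  have hinf : sInf (DeltaSet G₀) ≤ d := Nat.sInf_le hdDelta
  have hsn : s ≤ G₀.ncard := by
    have hsub : (↑U.toFinset : Set G) ⊆ G₀ := fun x hx =>
      hmemU x (Multiset.mem_toFinset.1 (by simpa using hx))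
    have := Set.ncard_le_ncard hsub (Set.toFinite G₀)
    rwa [Set.ncard_coe_finset] at this
  omega

theorem stmt_6 {G : Type*} [AddCommGroup G] [Fintype G] (G₀ : Set G)
    (hlcn : IsLCNSet G₀) (hnhf : DeltaSet G₀ ≠ ∅) :
    sInf (DeltaSet G₀) ≤ G₀.ncard - 2 := by
  exact stmt_6' G₀ hlcn hnhf
end

section
/- Let W = h₁⋯h₈ be a sequence of length 8 over the elementary abelian group C₃⁵ whose full sum is zero. Then there exist pairwise disjoint nonempty subsets I, J, K of {1,…,8} with I ∪ J ∪ K = {1,…,8} such that Σ_{i∈I} h_i = Σ_{j∈J} h_j = Σ_{k∈K} h_k. -/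
set_option maxRecDepth 100000 in
set_option maxHeartbeats 4000000 in
lemma key_stmt16 (T : Finset (ZMod 3 × ZMod 3))
    (hT : ∀ a b k : ZMod 3, (∀ t ∈ T, a * t.1 + b * t.2 + k = 0) → a = 0 ∧ b = 0) :
    ∃ a b k : ZMod 3, ∀ v : ZMod 3, ∃ t ∈ T, a * t.1 + b * t.2 + k = v := by
  revert hT; revert T; decide

theorem stmt_16 (h : Fin 8 → (Fin 5 → ZMod 3)) (hsum : ∑ i, h i = 0) :
    ∃ I J K : Finset (Fin 8), I.Nonempty ∧ J.Nonempty ∧ K.Nonempty ∧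
      Disjoint I J ∧ Disjoint I K ∧ Disjoint J K ∧ I ∪ J ∪ K = Finset.univ ∧
      ∑ i ∈ I, h i = ∑ j ∈ J, h j ∧ ∑ j ∈ J, h j = ∑ k ∈ K, h k := by
  classical
  let φ : (Fin 8 → ZMod 3) →ₗ[ZMod 3] (Fin 5 → ZMod 3) :=
    { toFun := fun c => ∑ i, c i • h i
      map_add' := by intro x y; simp [add_smul, Finset.sum_add_distrib]
      map_smul' := by intro m x; simp [mul_smul, ← Finset.smul_sum] }
  have hφ : ∀ c : Fin 8 → ZMod 3, φ c = ∑ i, c i • h i := fun c => rfl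
  have hone : (fun _ => (1:ZMod 3) : Fin 8 → ZMod 3) ∈ LinearMap.ker φ := by
    simp [LinearMap.mem_ker, hφ, hsum]
  have hdim : 3 ≤ Module.finrank (ZMod 3) (LinearMap.ker φ) := by
    have h1 := LinearMap.finrank_range_add_finrank_ker φ
    have h2 : Module.finrank (ZMod 3) (LinearMap.range φ) ≤ 5 := by
      have := Submodule.finrank_le (LinearMap.range φ)
      simpa using this
    have h3 : Module.finrank (ZMod 3) (Fin 8 → ZMod 3) = 8 := by simp
    omega
  obtain ⟨c, hcker, hcsp⟩ :
      ∃ c, c ∈ LinearMap.ker φ ∧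
        c ∉ Submodule.span (ZMod 3) {(fun _ => (1:ZMod 3) : Fin 8 → ZMod 3)} := by
    by_contra hcon
    push_neg at hcon
    have hle : LinearMap.ker φ ≤
        Submodule.span (ZMod 3) {(fun _ => (1:ZMod 3) : Fin 8 → ZMod 3)} :=
      fun x hx => hcon x hx
    have := Submodule.finrank_mono hle
    have h4 : Module.finrank (ZMod 3)
        (Submodule.span (ZMod 3) {(fun _ => (1:ZMod 3) : Fin 8 → ZMod 3)}) ≤ 1 := by
      simpa using finrank_span_le_card (R := ZMod 3)
        ({(fun _ => (1:ZMod 3))} : Set (Fin 8 → ZMod 3))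
    omega
  obtain ⟨d, hdker, hdsp⟩ :
      ∃ d, d ∈ LinearMap.ker φ ∧
        d ∉ Submodule.span (ZMod 3) {(fun _ => (1:ZMod 3) : Fin 8 → ZMod 3), c} := by
    by_contra hcon
    push_neg at hcon
    have hle : LinearMap.ker φ ≤
        Submodule.span (ZMod 3) {(fun _ => (1:ZMod 3) : Fin 8 → ZMod 3), c} :=
      fun x hx => hcon x hx
    have := Submodule.finrank_mono hle
    have h4 : Module.finrank (ZMod 3)
        (Submodule.span (ZMod 3) ({(fun _ => (1:ZMod 3)), c} : Set (Fin 8 → ZMod 3))) ≤ 2 := by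
      have h5 := finrank_span_le_card (R := ZMod 3)
        ({(fun _ => (1:ZMod 3)), c} : Set (Fin 8 → ZMod 3))
      have hcard : ({(fun _ => (1:ZMod 3)), c} : Set (Fin 8 → ZMod 3)).toFinset.card ≤ 2 := by
        rw [Set.toFinset_insert, Set.toFinset_singleton]
        exact (Finset.card_insert_le _ _).trans (by simp)
      omega
    omega
  have hsq1 : ∀ a k x : ZMod 3, a ≠ 0 → a * x + k = 0 → x = a * (-k) := by decide
  have hsq2 : ∀ a b k x y : ZMod 3, b ≠ 0 → a * x + b * y + k = 0 →
      y = b * (-k) + b * (-a) * x := by decide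
  have hT : ∀ a b k : ZMod 3, (∀ i, a * c i + b * d i + k = 0) → a = 0 ∧ b = 0 := by
    intro a b k hr
    by_cases hb : b = 0
    · subst hb
      refine ⟨?_, rfl⟩
      by_contra ha
      apply hcsp
      rw [Submodule.mem_span_singleton]
      refine ⟨a * (-k), ?_⟩
      funext i
      have h1 : a * c i + k = 0 := by linear_combination hr i
      simp only [Pi.smul_apply, smul_eq_mul, mul_one]
      exact (hsq1 a k (c i) ha h1).symm
    · exfalso
      apply hdsp
      rw [Submodule.mem_span_pair]
      refine ⟨b * (-k), b * (-a), ?_⟩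
      funext i
      have h1 := hr i
      simp only [Pi.add_apply, Pi.smul_apply, smul_eq_mul, mul_one]
      exact (hsq2 a b k (c i) (d i) hb h1).symm
  obtain ⟨a, b, k, habk⟩ :=
    key_stmt16 (Finset.image (fun i => (c i, d i)) Finset.univ)
      (by
        intro a b k hall
        exact hT a b k (fun i => hall _ (Finset.mem_image_of_mem _ (Finset.mem_univ i))))
  set e : Fin 8 → ZMod 3 := fun i => a * c i + b * d i + k with he
  have hes : ∀ v : ZMod 3, ∃ i, e i = v := by
    intro v
    obtain ⟨t, ht, htv⟩ := habk v
    obtain ⟨i, _, rfl⟩ := Finset.mem_image.mp ht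
    exact ⟨i, htv⟩
  have heker : ∑ i, e i • h i = 0 := by
    have hc0 : ∑ i, c i • h i = 0 := hcker
    have hd0 : ∑ i, d i • h i = 0 := hdker
    calc ∑ i, e i • h i
        = a • (∑ i, c i • h i) + b • (∑ i, d i • h i) + k • (∑ i, h i) := by
          rw [Finset.smul_sum, Finset.smul_sum, Finset.smul_sum, ← Finset.sum_add_distrib,
            ← Finset.sum_add_distrib]
          refine Finset.sum_congr rfl fun i _ => ?_
          simp [he, add_smul, mul_smul]
      _ = 0 := by rw [hc0, hd0, hsum]; simp
  set I : Finset (Fin 8) := Finset.univ.filter (fun i => e i = 1) with hI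
  set J : Finset (Fin 8) := Finset.univ.filter (fun i => e i = 2) with hJ
  set K : Finset (Fin 8) := Finset.univ.filter (fun i => e i = 0) with hK
  have hIne : I.Nonempty := by obtain ⟨i, hi⟩ := hes 1; exact ⟨i, by simp [hI, hi]⟩
  have hJne : J.Nonempty := by obtain ⟨i, hi⟩ := hes 2; exact ⟨i, by simp [hJ, hi]⟩
  have hKne : K.Nonempty := by obtain ⟨i, hi⟩ := hes 0; exact ⟨i, by simp [hK, hi]⟩
  have hIJ : Disjoint I J := by
    rw [Finset.disjoint_left]; intro x hx hx'
    simp only [hI, hJ, Finset.mem_filter] at hx hx'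
    rw [hx.2] at hx'; exact absurd hx'.2 (by decide)
  have hIK : Disjoint I K := by
    rw [Finset.disjoint_left]; intro x hx hx'
    simp only [hI, hK, Finset.mem_filter] at hx hx'
    rw [hx.2] at hx'; exact absurd hx'.2 (by decide)
  have hJK : Disjoint J K := by
    rw [Finset.disjoint_left]; intro x hx hx'
    simp only [hJ, hK, Finset.mem_filter] at hx hx'
    rw [hx.2] at hx'; exact absurd hx'.2 (by decide)
  have huniv : I ∪ J ∪ K = Finset.univ := by
    ext x
    simp only [Finset.mem_union, hI, hJ, hK, Finset.mem_filter, Finset.mem_univ, true_and,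
      iff_true]
    have h3 : ∀ y : ZMod 3, y = 1 ∨ y = 2 ∨ y = 0 := by decide
    rcases h3 (e x) with h4 | h4 | h4
    · exact Or.inl (Or.inl h4)
    · exact Or.inl (Or.inr h4)
    · exact Or.inr h4
  have hsplit : ∀ f : Fin 8 → (Fin 5 → ZMod 3),
      ∑ i, f i = ∑ i ∈ I, f i + ∑ i ∈ J, f i + ∑ i ∈ K, f i := by
    intro f
    rw [← huniv, Finset.sum_union (by
        rw [Finset.disjoint_union_left]; exact ⟨hIK, hJK⟩),
      Finset.sum_union hIJ]
  have hsum1 : ∑ i ∈ I, e i • h i = ∑ i ∈ I, h i := by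
    refine Finset.sum_congr rfl fun i hi => ?_
    have : e i = 1 := (Finset.mem_filter.mp hi).2
    rw [this, one_smul]
  have hsum2 : ∑ i ∈ J, e i • h i = (2:ZMod 3) • ∑ i ∈ J, h i := by
    rw [Finset.smul_sum]
    refine Finset.sum_congr rfl fun i hi => ?_
    have : e i = 2 := (Finset.mem_filter.mp hi).2
    rw [this]
  have hsum0 : ∑ i ∈ K, e i • h i = 0 := by
    refine Finset.sum_eq_zero fun i hi => ?_
    have : e i = 0 := (Finset.mem_filter.mp hi).2
    rw [this, zero_smul]
  have heq1 : (∑ i ∈ I, h i) + (2:ZMod 3) • (∑ i ∈ J, h i) = 0 := by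
    have h0 := hsplit (fun i => e i • h i)
    rw [heker, hsum1, hsum2, hsum0, add_zero] at h0
    exact h0.symm
  have heq2 : (∑ i ∈ I, h i) + (∑ i ∈ J, h i) + (∑ i ∈ K, h i) = 0 := by
    have h0 := hsplit h
    rw [hsum] at h0
    exact h0.symm
  have harith1 : ∀ u v : ZMod 3, u + 2 * v = 0 → u = v := by decide
  have harith2 : ∀ u w : ZMod 3, u + u + w = 0 → u = w := by decide
  have h12 : (∑ i ∈ I, h i) = ∑ j ∈ J, h j := by
    funext x
    have := congrFun heq1 x
    simp only [Pi.add_apply, Pi.smul_apply, smul_eq_mul, Pi.zero_apply,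
      Finset.sum_apply] at this ⊢
    exact harith1 _ _ this
  have h20 : (∑ j ∈ J, h j) = ∑ k ∈ K, h k := by
    funext x
    have h5 := congrFun heq2 x
    have h6 := congrFun h12 x
    simp only [Pi.add_apply, Pi.zero_apply, Finset.sum_apply] at h5 h6 ⊢
    rw [h6] at h5
    exact harith2 _ _ h5
  exact ⟨I, J, K, hIne, hJne, hKne, hIJ, hIK, hJK, huniv, h12, h20⟩
end
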